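/- arXiv:2504.14916 — 2 statements merged into one kernel-verified Lean document; each statement's English description precedes it below -/
import Mathlib

section
/- Let k ≥ 2, l ≥ 1, m ≥ 1, n = l + (k−1)·m, and let Γ be the generalized join K_{1,k−1}[K_l, K_m, …, K_m] (one clique of size l joined completely to k−1 pairwise non-adjacent cliques of size m): its vertex set is the disjoint union of V_1, …, V_k with |V_1| = l and |V_i| = m for 2 ≤ i ≤ k, any two distinct vertices inside the same V_i are adjacent, every vertex of V_1 is adjacent to every vertex of V_j for each j ≥ 2, and there are no other edges. Set d_1 = n − 1 and d_2 = l + m − 1. Then the Sombor characteristic polynomial of Γ equals (x + d_1·√2)^{l−1} · (x + d_2·√2)^{(m−1)(k−1)} · (x − (m−1)·d_2·√2)^{k−2} · [ (x − (l−1)·d_1·√2)·(x − (m−1)·d_2·√2) − l·m·(k−1)·(d_1² + d_2²) ]. -/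
open Polynomial
open scoped Classical

/-- Degree of a vertex. -/
noncomputable def sdeg {V : Type*} (G : SimpleGraph V) (v : V) : ℕ := {u | G.Adj v u}.ncard

/-- Sombor matrix of a graph. -/
noncomputable def somborMatrix {V : Type*} (G : SimpleGraph V) : Matrix V V ℝ :=
  Matrix.of fun u v =>
    if G.Adj u v then Real.sqrt ((sdeg G u : ℝ) ^ 2 + (sdeg G v : ℝ) ^ 2) else 0

/-- Sombor characteristic polynomial det(x·I − S(Γ)). -/
noncomputable def somborCharpoly {V : Type*} [Fintype V] [DecidableEq V] (G : SimpleGraph V) :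
    Polynomial ℝ :=
  (somborMatrix G).charpoly

noncomputable def rt2 : ℝ := Real.sqrt 2

/-- The `R`-super `Γ` graph. -/
def superGraph {V : Type*} (A : SimpleGraph V) (r : V → V → Prop) (hr : Equivalence r) :
    SimpleGraph V where
  Adj x y := x ≠ y ∧ (r x y ∨ ∃ x' y', r x x' ∧ r y y' ∧ A.Adj x' y')
  symm := by
    constructor
    rintro x y ⟨hxy, h | ⟨x', y', hx, hy, hadj⟩⟩
    · exact ⟨hxy.symm, Or.inl (hr.symm h)⟩
    · exact ⟨hxy.symm, Or.inr ⟨y', x', hy, hx, hadj.symm⟩⟩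
  loopless := by constructor; rintro x ⟨h, -⟩; exact h rfl

/-- Same-order relation. -/
def orderRel (G : Type*) [Monoid G] : G → G → Prop := fun x y => orderOf x = orderOf y

theorem orderRel_equivalence (G : Type*) [Monoid G] : Equivalence (orderRel G) :=
  ⟨fun _ => rfl, fun h => h.symm, fun h1 h2 => h1.trans h2⟩

/-- Conjugacy relation. -/
def conjRel (G : Type*) [Group G] : G → G → Prop := fun x y => ∃ a : G, x = a * y * a⁻¹

theorem conjRel_equivalence (G : Type*) [Group G] : Equivalence (conjRel G) := by
  constructor
  · intro x; exact ⟨1, by simp⟩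
  · rintro x y ⟨a, rfl⟩; exact ⟨a⁻¹, by group⟩
  · rintro x y z ⟨a, rfl⟩ ⟨b, rfl⟩; exact ⟨a * b, by group⟩

/-- Commuting graph. -/
def commutingGraph (G : Type*) [Group G] : SimpleGraph G where
  Adj x y := x ≠ y ∧ x * y = y * x
  symm := by constructor; rintro x y ⟨h, c⟩; exact ⟨h.symm, c.symm⟩
  loopless := by constructor; rintro x ⟨h, -⟩; exact h rfl

/-- Power graph. -/
def powerGraph (G : Type*) [Group G] : SimpleGraph G where
  Adj x y := x ≠ y ∧ (x ∈ Subgroup.zpowers y ∨ y ∈ Subgroup.zpowers x)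
  symm := by constructor; rintro x y ⟨h, c⟩; exact ⟨h.symm, c.symm⟩
  loopless := by constructor; rintro x ⟨h, -⟩; exact h rfl

/-- Enhanced power graph. -/
def enhancedPowerGraph (G : Type*) [Group G] : SimpleGraph G where
  Adj x y := x ≠ y ∧ ∃ z : G, x ∈ Subgroup.zpowers z ∧ y ∈ Subgroup.zpowers z
  symm := by constructor; rintro x y ⟨h, z, hx, hy⟩; exact ⟨h.symm, z, hy, hx⟩
  loopless := by constructor; rintro x ⟨h, -⟩; exact h rfl

/-- The generalized join `K_{1,k-1}[K_{nn 0}, …, K_{nn (k-1)}]`: block `i` is a clique of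
size `nn i`, and every vertex of block `0` is adjacent to every other vertex. -/
def joinGraph (k : ℕ) (nn : Fin k → ℕ) : SimpleGraph (Σ i : Fin k, Fin (nn i)) where
  Adj x y := x ≠ y ∧ (x.1 = y.1 ∨ x.1.val = 0 ∨ y.1.val = 0)
  symm := by
    constructor
    rintro x y ⟨h, c | c | c⟩
    · exact ⟨h.symm, Or.inl c.symm⟩
    · exact ⟨h.symm, Or.inr (Or.inr c)⟩
    · exact ⟨h.symm, Or.inr (Or.inl c)⟩
  loopless := by constructor; rintro x ⟨h, -⟩; exact h rfl

/-!
Off the diagonal, the Sombor matrix `S` of a generalized join depends only on the blocks of its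
two vertices: `S = W.submatrix b b - diagonal (W (b u) (b u))` for the block map `b` and a `k × k`
weight matrix `W`. For a matrix of this shape, `det (1 - A B) = det (1 - B A)` reduces
`det (diagonal (λ ∘ b) - W.submatrix b b)` to `∏ λᵢ ^ (|Vᵢ| - 1)` times the determinant of the
`k × k` quotient `diagonal λ - diagonal |Vᵢ| * W`. For block sizes `l, m, …, m` the quotient is an
arrow matrix, which is again of this shape for the partition `{0}, {1, …, k - 1}`, leaving a
`2 × 2` determinant. This gives the characteristic polynomial at all but three real points,
which determines it.
-/

open Finset Matrix

@[to_additive]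
theorem Fintype.prod_ite_eq_mul_pow {ι M : Type*} [Fintype ι] [DecidableEq ι] [CommMonoid M]
    (i₀ : ι) (a b : M) :
    ∏ i, (if i = i₀ then a else b) = a * b ^ (Fintype.card ι - 1) := by
  simp [Finset.prod_ite, filter_eq', filter_ne', card_erase_of_mem]

theorem sqrt_sq_add_sq_self {d : ℝ} (hd : 0 ≤ d) : √(d ^ 2 + d ^ 2) = d * rt2 := by
  rw [← two_mul, Real.sqrt_mul zero_le_two, Real.sqrt_sq hd, rt2, mul_comm]

namespace Matrix

variable {V ι F : Type*} [Fintype V] [Fintype ι] [DecidableEq V] [DecidableEq ι] [Field F]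

omit [Fintype ι] in
theorem one_submatrix_mul_diagonal_comp_mul_one_submatrix (b : V → ι) (f : ι → F) :
    (1 : Matrix ι ι F).submatrix id b * diagonal (f ∘ b) * (1 : Matrix ι ι F).submatrix b id =
      diagonal fun i => (#{v | b v = i} : F) * f i := by
  ext i j
  have hterm : ∀ v, ((1 : Matrix ι ι F).submatrix id b * diagonal (f ∘ b)) i v *
      (1 : Matrix ι ι F).submatrix b id v j = if b v = i then diagonal f i j else 0 := by
    intro v
    rcases eq_or_ne (b v) i with rfl | hv
    · simp [one_apply, diagonal_apply]
    · simp [one_apply, hv, hv.symm]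
  simp_rw [mul_apply (M := _ * _), hterm, Finset.sum_ite, Finset.sum_const_zero, add_zero,
    Finset.sum_const, nsmul_eq_mul, diagonal_apply, mul_ite, mul_zero]

theorem det_diagonal_comp_sub_submatrix (b : V → ι) {lam : ι → F} (hlam : ∀ i, lam i ≠ 0)
    (G : Matrix ι ι F) :
    (diagonal (lam ∘ b) - G.submatrix b b).det * ∏ i, lam i =
      (∏ v, lam (b v)) * (diagonal lam - diagonal (fun i => (#{v | b v = i} : F)) * G).det := by
  set P := (1 : Matrix ι ι F).submatrix b id
  set Pt := (1 : Matrix ι ι F).submatrix id b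
  set D' := diagonal ((fun i => (lam i)⁻¹) ∘ b)
  set E := diagonal (fun i => (#{v | b v = i} : F) * (lam i)⁻¹) * G
  have hG : G.submatrix b b = P * G * Pt := by
    ext u v
    simp [P, Pt, mul_apply, one_apply]
  have hleft : diagonal (lam ∘ b) - G.submatrix b b =
      diagonal (lam ∘ b) * (1 - (D' * P * G) * Pt) := by
    have : diagonal (lam ∘ b) * D' = 1 := by
      rw [diagonal_mul_diagonal, ← diagonal_one]
      exact congrArg diagonal (funext fun v => mul_inv_cancel₀ (hlam (b v)))
    rw [Matrix.mul_sub, Matrix.mul_one, ← Matrix.mul_assoc, ← Matrix.mul_assoc,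
      ← Matrix.mul_assoc, this, Matrix.one_mul, hG]
  have hswap : Pt * (D' * P * G) = E := by
    rw [← Matrix.mul_assoc, ← Matrix.mul_assoc]
    exact congrArg (· * G)
      (one_submatrix_mul_diagonal_comp_mul_one_submatrix b fun i => (lam i)⁻¹)
  have hright : diagonal lam - diagonal (fun i => (#{v | b v = i} : F)) * G =
      diagonal lam * (1 - E) := by
    rw [Matrix.mul_sub, Matrix.mul_one, ← Matrix.mul_assoc, diagonal_mul_diagonal]
    congr 3
    funext i
    field_simp [hlam i]
  rw [hleft, hright, det_mul, det_mul, det_one_sub_mul_comm, hswap, det_diagonal, det_diagonal]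
  simp only [Function.comp_apply]
  ring

omit [Fintype V] [DecidableEq V] in
theorem det_arrow (i₀ : ι) {p q r s : F} (hs : s ≠ 0) (hι : 2 ≤ Fintype.card ι) :
    (of fun i j => if i = j then (if i = i₀ then p else s)
      else if i = i₀ then q else if j = i₀ then r else 0 : Matrix ι ι F).det =
      s ^ (Fintype.card ι - 2) * (p * s - (Fintype.card ι - 1 : F) * q * r) := by
  -- The arrow matrix is of the shape of `det_diagonal_comp_sub_submatrix` for `{i₀}`, `ι \ {i₀}`.
  set b : ι → Fin 2 := fun i => if i = i₀ then 0 else 1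
  have hA : (of fun i j => if i = j then (if i = i₀ then p else s)
      else if i = i₀ then q else if j = i₀ then r else 0 : Matrix ι ι F) =
      diagonal ((fun _ => s) ∘ b) - (!![s - p, -q; -r, 0]).submatrix b b := by
    ext i j
    by_cases hi : i = i₀ <;> by_cases hj : j = i₀ <;> by_cases hij : i = j <;> simp_all [b]
  have hcard0 : #{i | b i = 0} = 1 := by simp [b, filter_eq']
  have hcard1 : (#{i | b i = 1} : F) = Fintype.card ι - 1 := by
    simp [b, filter_ne', card_erase_of_mem, Nat.cast_sub (one_le_two.trans hι)]
  have h := det_diagonal_comp_sub_submatrix b (fun _ => hs) !![s - p, -q; -r, 0]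
  rw [← hA, det_fin_two] at h
  simp only [prod_const, card_univ, Fintype.card_fin, Fin.isValue, sub_apply, diagonal_apply_eq,
    diagonal_mul, hcard0, Nat.cast_one, of_apply, cons_val', cons_val_zero, cons_val_fin_one,
    one_mul, sub_sub_cancel, hcard1, cons_val_one, mul_zero, sub_zero, ne_eq, zero_ne_one,
    not_false_eq_true, diagonal_apply_ne, mul_neg, sub_neg_eq_add, zero_add, one_ne_zero] at h
  obtain ⟨c, hc⟩ : ∃ c, Fintype.card ι = c + 2 := ⟨_, (Nat.sub_add_cancel hι).symm⟩
  rw [hc] at h ⊢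
  apply mul_right_cancel₀ (pow_ne_zero 2 hs)
  rw [h, Nat.add_sub_cancel, pow_add]
  push_cast
  ring

end Matrix

theorem card_filter_sigma_fst_eq {k : ℕ} (nn : Fin k → ℕ) (j : Fin k) :
    #{v : Σ i, Fin (nn i) | v.1 = j} = nn j := by
  rw [← Fintype.card_subtype, Fintype.card_congr (Equiv.sigmaSubtype j), Fintype.card_fin]

theorem sdeg_eq_card {V : Type*} [Fintype V] (G : SimpleGraph V) [DecidableRel G.Adj] (v : V) :
    sdeg G v = #{u | G.Adj v u} := by
  rw [sdeg, Set.ncard_eq_toFinset_card', Set.toFinset_ofPred]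

section JoinGraph

variable {k : ℕ} [NeZero k] (nn : Fin k → ℕ)

theorem joinGraph_adj_iff {u v : Σ i, Fin (nn i)} :
    (joinGraph k nn).Adj u v ↔ u ≠ v ∧ (u.1 = v.1 ∨ u.1 = 0 ∨ v.1 = 0) := by
  simp only [joinGraph, Fin.val_eq_zero_iff]

def joinDegree (i : Fin k) : ℕ := if i = 0 then (∑ j, nn j) - 1 else nn i + nn 0 - 1

theorem sdeg_joinGraph (v : Σ i, Fin (nn i)) : sdeg (joinGraph k nn) v = joinDegree nn v.1 := by
  rw [sdeg_eq_card, joinDegree]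
  split_ifs with hv
  · have : ({u | (joinGraph k nn).Adj v u} : Finset _) = univ.erase v := by
      ext u; simp [joinGraph_adj_iff, hv, eq_comm]
    rw [this, card_erase_of_mem (mem_univ v), card_univ, Fintype.card_sigma]
    simp
  · have : ({u | (joinGraph k nn).Adj v u} : Finset _) =
        (univ.filter (·.1 = v.1) ∪ univ.filter (·.1 = 0)).erase v := by
      ext u; simp [joinGraph_adj_iff, hv, eq_comm]
    rw [this, card_erase_of_mem (by simp), card_union_of_disjoint, card_filter_sigma_fst_eq,
      card_filter_sigma_fst_eq]
    exact disjoint_filter.2 fun u _ h h0 => hv (h ▸ h0)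

noncomputable def joinSomborWeight : Matrix (Fin k) (Fin k) ℝ :=
  of fun i j => if i = j ∨ i = 0 ∨ j = 0 then
    √((joinDegree nn i : ℝ) ^ 2 + (joinDegree nn j : ℝ) ^ 2) else 0

theorem somborMatrix_joinGraph :
    somborMatrix (joinGraph k nn) =
      (joinSomborWeight nn).submatrix Sigma.fst Sigma.fst -
        diagonal fun u => joinSomborWeight nn u.1 u.1 := by
  ext u v
  rcases eq_or_ne u v with rfl | huv
  · simp [somborMatrix]
  · rw [Matrix.sub_apply, submatrix_apply, diagonal_apply_ne _ huv, sub_zero]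
    simp only [somborMatrix, joinSomborWeight, joinGraph_adj_iff, sdeg_joinGraph, of_apply, ne_eq,
      huv, not_false_eq_true, true_and]

noncomputable def joinSomborQuotient (x : ℝ) : Matrix (Fin k) (Fin k) ℝ :=
  diagonal (fun i => x + joinSomborWeight nn i i) -
    diagonal (fun i => (nn i : ℝ)) * joinSomborWeight nn

theorem eval_somborCharpoly_joinGraph_mul_prod {x : ℝ}
    (hx : ∀ i, x + joinSomborWeight nn i i ≠ 0) :
    (somborCharpoly (joinGraph k nn)).eval x * ∏ i, (x + joinSomborWeight nn i i) =
      (∏ i, (x + joinSomborWeight nn i i) ^ nn i) * (joinSomborQuotient nn x).det := by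
  have hmat : scalar _ x - somborMatrix (joinGraph k nn) =
      diagonal ((fun i => x + joinSomborWeight nn i i) ∘ Sigma.fst) -
        (joinSomborWeight nn).submatrix Sigma.fst Sigma.fst := by
    rw [somborMatrix_joinGraph, scalar_apply, sub_sub_eq_add_sub, diagonal_add]
    rfl
  rw [somborCharpoly, eval_charpoly, hmat, det_diagonal_comp_sub_submatrix _ hx,
    joinSomborQuotient]
  simp only [card_filter_sigma_fst_eq, Fintype.prod_sigma, prod_const, card_univ, Fintype.card_fin]

end JoinGraph

section TwoSizes

variable {k : ℕ} [NeZero k] {l m : ℕ}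

local notation "d₁" => ((l + (k - 1) * m : ℕ) : ℝ) - 1
local notation "d₂" => (l : ℝ) + m - 1

theorem joinDegree_ite (hl : 1 ≤ l) (i : Fin k) :
    (joinDegree (fun i : Fin k => if i = 0 then l else m) i : ℝ) = if i = 0 then d₁ else d₂ := by
  unfold joinDegree
  split_ifs with hi
  · rw [Fintype.sum_ite_eq_add_nsmul, Fintype.card_fin, smul_eq_mul,
      Nat.cast_sub (hl.trans (Nat.le_add_right _ _)), Nat.cast_one]
  · dsimp only
    rw [if_neg hi, if_pos rfl, Nat.cast_sub (hl.trans (Nat.le_add_left _ _))]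
    push_cast
    ring

theorem joinSomborWeight_ite (hl : 1 ≤ l) :
    joinSomborWeight (fun i : Fin k => if i = 0 then l else m) =
      of fun i j => if i = j then (if i = 0 then d₁ * rt2 else d₂ * rt2)
        else if i = 0 ∨ j = 0 then √(d₁ ^ 2 + d₂ ^ 2) else 0 := by
  ext i j
  simp only [joinSomborWeight, of_apply, joinDegree_ite hl]
  have hd₁ : 0 ≤ d₁ := by
    rw [sub_nonneg, Nat.one_le_cast]; exact hl.trans (Nat.le_add_right _ _)
  have hd₂ : 0 ≤ d₂ := by
    have : (1 : ℝ) ≤ l := Nat.one_le_cast.2 hl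
    have : (0 : ℝ) ≤ m := m.cast_nonneg
    linarith
  rcases eq_or_ne i j with rfl | hij
  · by_cases hi : i = 0
    · simp only [hi, true_or, if_true, sqrt_sq_add_sq_self hd₁]
    · simp only [hi, true_or, if_true, if_false, sqrt_sq_add_sq_self hd₂]
  · rcases eq_or_ne i 0 with rfl | hi <;> rcases eq_or_ne j 0 with rfl | hj <;>
      simp_all [add_comm]

theorem joinSomborQuotient_ite (hl : 1 ≤ l) (x : ℝ) :
    joinSomborQuotient (fun i : Fin k => if i = 0 then l else m) x =
      of fun i j => if i = j then
          (if i = 0 then x - (l - 1) * d₁ * rt2 else x - (m - 1) * d₂ * rt2)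
        else if i = 0 then -(l * √(d₁ ^ 2 + d₂ ^ 2))
        else if j = 0 then -(m * √(d₁ ^ 2 + d₂ ^ 2)) else 0 := by
  ext i j
  rw [joinSomborQuotient, joinSomborWeight_ite hl, Matrix.sub_apply, diagonal_mul]
  rcases eq_or_ne i j with rfl | hij
  · by_cases hi : i = 0 <;> simp [hi] <;> ring
  · rcases eq_or_ne i 0 with rfl | hi <;> rcases eq_or_ne j 0 with rfl | hj <;> simp_all

theorem eval_somborCharpoly_joinGraph_ite (hk : 2 ≤ k) (hl : 1 ≤ l) (hm : 1 ≤ m) {x : ℝ}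
    (h₁ : x + d₁ * rt2 ≠ 0) (h₂ : x + d₂ * rt2 ≠ 0) (h₃ : x - (m - 1) * d₂ * rt2 ≠ 0) :
    (somborCharpoly (joinGraph k fun i => if i = 0 then l else m)).eval x =
      (x + d₁ * rt2) ^ (l - 1) * (x + d₂ * rt2) ^ ((m - 1) * (k - 1)) *
        (x - (m - 1) * d₂ * rt2) ^ (k - 2) *
        ((x - (l - 1) * d₁ * rt2) * (x - (m - 1) * d₂ * rt2) -
          l * m * (k - 1) * (d₁ ^ 2 + d₂ ^ 2)) := by
  have hdiag : ∀ i, x + joinSomborWeight (fun i : Fin k => if i = 0 then l else m) i i =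
      if i = 0 then x + d₁ * rt2 else x + d₂ * rt2 := by
    intro i
    rw [joinSomborWeight_ite hl]
    split_ifs <;> simp [*]
  have key := eval_somborCharpoly_joinGraph_mul_prod (fun i : Fin k => if i = 0 then l else m)
    (x := x) fun i => by rw [hdiag]; split_ifs <;> assumption
  have hprod : ∏ i, (x + joinSomborWeight (fun i : Fin k => if i = 0 then l else m) i i) ^
      (if i = 0 then l else m) = (x + d₁ * rt2) ^ l * ((x + d₂ * rt2) ^ m) ^ (k - 1) := by
    calc _ = ∏ i : Fin k, if i = 0 then (x + d₁ * rt2) ^ l else (x + d₂ * rt2) ^ m :=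
          prod_congr rfl fun i _ => by rw [hdiag]; split_ifs <;> rfl
      _ = _ := by rw [Fintype.prod_ite_eq_mul_pow, Fintype.card_fin]
  rw [joinSomborQuotient_ite hl, det_arrow 0 h₃ (by simpa using hk), hprod,
    prod_congr rfl fun i _ => hdiag i, Fintype.prod_ite_eq_mul_pow, Fintype.card_fin] at key
  have hqr : -(l * √(d₁ ^ 2 + d₂ ^ 2)) * -(m * √(d₁ ^ 2 + d₂ ^ 2)) =
      l * m * (d₁ ^ 2 + d₂ ^ 2) := by
    rw [neg_mul_neg, mul_mul_mul_comm, Real.mul_self_sqrt (by positivity)]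
  rw [mul_assoc ((k : ℝ) - 1), hqr] at key
  apply mul_right_cancel₀ (mul_ne_zero h₁ (pow_ne_zero (k - 1) h₂))
  rw [key, ← pow_sub_one_mul (by omega : l ≠ 0), ← pow_sub_one_mul (by omega : m ≠ 0), mul_pow,
    ← pow_mul]
  ring

end TwoSizes

theorem stmt2 (k l m : ℕ) [NeZero k] (hk : 2 ≤ k) (hl : 1 ≤ l) (hm : 1 ≤ m)
    (n : ℕ) (hn : n = l + (k - 1) * m) :
    somborCharpoly (joinGraph k (fun i => if i = 0 then l else m)) =
      (X + C (((n : ℝ) - 1) * rt2)) ^ (l - 1) *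
      (X + C (((l : ℝ) + (m : ℝ) - 1) * rt2)) ^ ((m - 1) * (k - 1)) *
      (X - C (((m : ℝ) - 1) * ((l : ℝ) + (m : ℝ) - 1) * rt2)) ^ (k - 2) *
      ((X - C (((l : ℝ) - 1) * ((n : ℝ) - 1) * rt2)) *
          (X - C (((m : ℝ) - 1) * ((l : ℝ) + (m : ℝ) - 1) * rt2)) -
        C ((l : ℝ) * (m : ℝ) * ((k : ℝ) - 1) *
            (((n : ℝ) - 1) ^ 2 + ((l : ℝ) + (m : ℝ) - 1) ^ 2))) := by
  subst hn
  apply Polynomial.eq_of_infinite_eval_eq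
  refine Set.Infinite.mono (fun x hx => ?_)
    (Set.toFinite {-((((l + (k - 1) * m : ℕ) : ℝ) - 1) * rt2), -(((l : ℝ) + m - 1) * rt2),
      ((m : ℝ) - 1) * ((l : ℝ) + m - 1) * rt2}).infinite_compl
  simp only [Set.mem_compl_iff, Set.mem_insert_iff, Set.mem_singleton_iff, not_or] at hx
  obtain ⟨h₁, h₂, h₃⟩ := hx
  simp only [Set.mem_ofPred_eq, eval_mul, eval_pow, eval_add, eval_sub, eval_X, eval_C]
  exact eval_somborCharpoly_joinGraph_ite hk hl hm (fun h => h₁ (eq_neg_of_add_eq_zero_left h))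
    (fun h => h₂ (eq_neg_of_add_eq_zero_left h)) (sub_ne_zero.2 h₃)
end

section
/- For every even integer n ≥ 2, the real number −(n+1)·√2 is a Sombor eigenvalue of the conjugacy super power graph P^c(Q_{4n}) of the generalized quaternion group Q_{4n} with multiplicity at least 2n−2; that is, the kernel of S(P^c(Q_{4n})) + (n+1)·√2·I has dimension at least 2n−2 over ℝ. -/
open Polynomial
open scoped Classical

/-!
For even `n`, the conjugacy class of `xa j` in `Q_{4n}` is `{xa k | k ≡ j mod 2}`, and the cyclic
subgroup `⟨xa j⟩ = {1, a n, xa j, xa (j + n)}` does not leave that class. Hence the neighbours of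
`xa j` in `P^c(Q_{4n})` are `1`, `a n` and the other `n - 1` members of its class, so
`deg (xa j) = n + 1`, and any two members of a class are adjacent twins. For adjacent twins `u, v`
of degree `d` the columns `u` and `v` of `S + d√2·I` coincide, so `e_u - e_v` lies in its kernel.
The differences `e_{xa j} - e_{xa r}`, with `r ∈ {0, 1}` the representative of the class of `j`
and `j ∉ {0, 1}`, are `2n - 2` linearly independent such vectors.
-/

def SimpleGraph.IsTrueTwin {V : Type*} (G : SimpleGraph V) (u v : V) : Prop :=
  G.Adj u v ∧ ∀ w, w ≠ u → w ≠ v → (G.Adj u w ↔ G.Adj v w)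

section Sombor

open Matrix

variable {V : Type*} {G : SimpleGraph V} {u v : V}

theorem SimpleGraph.IsTrueTwin.sdeg_eq [Finite V] (h : G.IsTrueTwin u v) :
    sdeg G u = sdeg G v := by
  set common := {w | w ≠ u ∧ w ≠ v ∧ G.Adj u w}
  have hu : {w | G.Adj u w} = insert v common := by
    ext w
    by_cases hwv : w = v
    · subst hwv; simp [h.1, common]
    · by_cases hwu : w = u
      · subst hwu; simp [common, hwv]
      · simp [common, hwu, hwv]
  have hv : {w | G.Adj v w} = insert u common := by
    ext w
    by_cases hwu : w = u
    · subst hwu; simp [h.1.symm, common]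
    · by_cases hwv : w = v
      · subst hwv; simp [common, hwu]
      · simp [common, hwu, hwv, h.2 w hwu hwv]
  rw [sdeg, sdeg, hu, hv, Set.ncard_insert_of_notMem (by simp [common]),
    Set.ncard_insert_of_notMem (by simp [common])]

theorem SimpleGraph.IsTrueTwin.somborMatrix_add_smul_one_apply [Finite V] [DecidableEq V]
    (h : G.IsTrueTwin u v) (w : V) :
    (somborMatrix G + ((sdeg G u : ℝ) * Real.sqrt 2) • 1) w u =
      (somborMatrix G + ((sdeg G u : ℝ) * Real.sqrt 2) • 1) w v := by
  have hdeg := h.sdeg_eq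
  have hdiag : Real.sqrt ((sdeg G u : ℝ) ^ 2 + (sdeg G u : ℝ) ^ 2) = sdeg G u * Real.sqrt 2 := by
    rw [← two_mul, Real.sqrt_mul zero_le_two, Real.sqrt_sq (Nat.cast_nonneg _), mul_comm]
  simp only [Matrix.add_apply, Matrix.smul_apply, one_apply, somborMatrix, of_apply, smul_eq_mul,
    ← hdeg]
  by_cases hwu : w = u
  · subst hwu; simp [h.1, h.1.ne, hdiag]
  by_cases hwv : w = v
  · subst hwv; simp [h.1.symm, h.1.ne', ← hdeg, hdiag]
  simp only [hwu, hwv, G.adj_comm w, h.2 w hwu hwv, if_false]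

theorem SimpleGraph.IsTrueTwin.somborMatrix_add_smul_one_mulVec [Fintype V] [DecidableEq V]
    (h : G.IsTrueTwin u v) :
    (somborMatrix G + ((sdeg G u : ℝ) * Real.sqrt 2) • 1) *ᵥ (Pi.single u 1 - Pi.single v 1) =
      0 := by
  ext w
  simp [mulVec_sub, h.somborMatrix_add_smul_one_apply w]

end Sombor

theorem linearIndependent_of_apply_eq_single {ι V K : Type*} [Semiring K] [DecidableEq ι]
    {v : ι → V → K} (p : ι → V) (hv : ∀ i j, v i (p j) = (Pi.single i 1 : ι → K) j) :
    LinearIndependent K v := by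
  refine LinearIndependent.of_comp (LinearMap.funLeft K K p) ?_
  convert Pi.linearIndependent_single_one ι K with i
  exact funext (hv i)

theorem ZMod.mem_zmultiples_two_iff {m : ℕ} (x : ZMod m) :
    x ∈ AddSubgroup.zmultiples (2 : ZMod m) ↔ ∃ k, x = 2 * k := by
  rw [AddSubgroup.mem_zmultiples_iff]
  constructor
  · rintro ⟨k, rfl⟩
    exact ⟨k, by rw [zsmul_eq_mul, mul_comm]⟩
  · rintro ⟨k, rfl⟩
    obtain ⟨k, rfl⟩ := ZMod.intCast_surjective k
    exact ⟨k, by rw [zsmul_eq_mul, mul_comm]⟩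

theorem ZMod.card_zmultiples_two {n : ℕ} (hn : n ≠ 0) :
    Nat.card (AddSubgroup.zmultiples (2 : ZMod (2 * n))) = n := by
  rw [Nat.card_zmultiples, show (2 : ZMod (2 * n)) = (2 : ℕ) from rfl,
    ZMod.addOrderOf_coe _ (by positivity), Nat.gcd_mul_right_left,
    Nat.mul_div_cancel_left _ zero_lt_two]

theorem AddSubgroup.ncard_setOf_sub_mem {A : Type*} [AddGroup A] (H : AddSubgroup A) (i : A) :
    {j | j - i ∈ H}.ncard = Nat.card H := by
  have : {j | j - i ∈ H} = (· + i) '' (H : Set A) := by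
    ext j; simp [Set.image_add_right, sub_eq_add_neg]
  rw [this, Set.ncard_image_of_injective _ (add_left_injective i)]
  exact (Nat.card_coe_set_eq _).symm

theorem ZMod.exists_mem_pair_sub_mem_zmultiples_two {m : ℕ} [NeZero m] (j : ZMod m) :
    ∃ r ∈ ({0, 1} : Finset (ZMod m)), j - r ∈ AddSubgroup.zmultiples 2 := by
  refine ⟨(j.val % 2 : ℕ), ?_, (mem_zmultiples_two_iff _).2 ⟨(j.val / 2 : ℕ), ?_⟩⟩
  · rcases Nat.mod_two_eq_zero_or_one j.val with h | h <;> simp [h]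
  · have hj := congrArg (Nat.cast : ℕ → ZMod m) (Nat.mod_add_div j.val 2)
    rw [Nat.cast_add, Nat.cast_mul, ZMod.natCast_zmod_val, Nat.cast_two] at hj
    linear_combination -hj

abbrev conjSuperPowerGraph (G : Type*) [Group G] : SimpleGraph G :=
  superGraph (powerGraph G) (conjRel G) (conjRel_equivalence G)

namespace QuaternionGroup

variable {n : ℕ}

@[simp]
theorem a_eq_one_iff {m : ZMod (2 * n)} : a m = 1 ↔ m = 0 := by
  rw [← a_zero, a.injEq]

@[simp]
theorem xa_ne_one (i : ZMod (2 * n)) : xa i ≠ 1 := by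
  rw [one_def]
  exact fun h => nomatch h

@[simp]
theorem one_ne_xa (i : ZMod (2 * n)) : 1 ≠ xa i :=
  (xa_ne_one i).symm

theorem natCast_add_self : (n : ZMod (2 * n)) + n = 0 := by
  rw [← two_mul]
  exact_mod_cast ZMod.natCast_self (2 * n)

theorem natCast_ne_zero [NeZero n] : (n : ZMod (2 * n)) ≠ 0 := by
  rw [Ne, ZMod.natCast_eq_zero_iff]
  exact fun h => NeZero.ne n (Nat.eq_zero_of_dvd_of_lt h (by have := NeZero.pos n; omega))

theorem natCast_mem_zmultiples_two (heven : Even n) :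
    (n : ZMod (2 * n)) ∈ AddSubgroup.zmultiples 2 := by
  obtain ⟨m, rfl⟩ := heven
  exact (ZMod.mem_zmultiples_two_iff _).2 ⟨m, by push_cast; ring⟩

theorem a_pow (m : ZMod (2 * n)) (k : ℕ) : a m ^ k = a ((k : ZMod (2 * n)) * m) := by
  induction k with
  | zero => simp
  | succ k ih => rw [pow_succ, ih, a_mul_a]; push_cast; ring_nf

theorem exists_eq_a_of_mem_zpowers [NeZero n] {g : QuaternionGroup n} {m : ZMod (2 * n)}
    (h : g ∈ Subgroup.zpowers (a m)) : ∃ j, g = a j := by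
  obtain ⟨k, rfl⟩ := Submonoid.mem_powers_iff _ _ |>.1 (mem_powers_iff_mem_zpowers.2 h)
  exact ⟨_, a_pow m k⟩

theorem mem_zpowers_xa [NeZero n] {g : QuaternionGroup n} {s : ZMod (2 * n)}
    (h : g ∈ Subgroup.zpowers (xa s)) :
    g = 1 ∨ g = a (n : ZMod (2 * n)) ∨ g = xa s ∨ g = xa (s + (n : ZMod (2 * n))) := by
  rw [mem_zpowers_iff_mem_range_orderOf, orderOf_xa, Finset.mem_image] at h
  obtain ⟨k, hk, rfl⟩ := h
  have h3 : xa s ^ 3 = xa (s + (n : ZMod (2 * n))) := by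
    rw [pow_succ, xa_sq, a_mul_xa, sub_eq_add_neg, neg_eq_of_add_eq_zero_left natCast_add_self]
  simp only [Finset.mem_range] at hk
  interval_cases k <;> simp [xa_sq, h3]

theorem conj_xa (g : QuaternionGroup n) (j : ZMod (2 * n)) :
    ∃ i, g * xa j * g⁻¹ = xa i ∧ i - j ∈ AddSubgroup.zmultiples 2 := by
  cases g with
  | a k =>
    refine ⟨j - 2 * k, ?_, (ZMod.mem_zmultiples_two_iff _).2 ⟨-k, by ring⟩⟩
    change a k * xa j * a (-k) = _
    rw [a_mul_xa, xa_mul_a]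
    ring_nf
  | xa m =>
    refine ⟨2 * m - j, ?_, (ZMod.mem_zmultiples_two_iff _).2 ⟨m - j, by ring⟩⟩
    change xa m * xa j * xa ((n : ZMod (2 * n)) + m) = _
    rw [xa_mul_xa, a_mul_xa]
    ring_nf

theorem conjRel_xa {x : QuaternionGroup n} {j : ZMod (2 * n)} (h : conjRel _ x (xa j)) :
    ∃ i, x = xa i ∧ i - j ∈ AddSubgroup.zmultiples 2 := by
  obtain ⟨g, rfl⟩ := h
  exact conj_xa g j

theorem conjRel_xa_xa {i j : ZMod (2 * n)} (h : i - j ∈ AddSubgroup.zmultiples 2) :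
    conjRel _ (xa i) (xa j) := by
  obtain ⟨k, hk⟩ := (ZMod.mem_zmultiples_two_iff _).1 h
  refine ⟨a (-k), ?_⟩
  change _ = a (-k) * xa j * a (-(-k))
  rw [a_mul_xa, xa_mul_a]
  congr 1
  linear_combination hk

theorem conjRel_a {x : QuaternionGroup n} {m : ZMod (2 * n)} (h : conjRel _ x (a m)) :
    x = a m ∨ x = a (-m) := by
  obtain ⟨g, rfl⟩ := h
  cases g with
  | a k =>
    left
    change a k * a m * a (-k) = _
    rw [a_mul_a, a_mul_a]
    ring_nf
  | xa k =>
    right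
    change xa k * a m * xa ((n : ZMod (2 * n)) + k) = _
    rw [xa_mul_a, xa_mul_xa]
    congr 1
    linear_combination (natCast_add_self (n := n))

theorem powerGraph_adj_a_xa_iff [NeZero n] {m s : ZMod (2 * n)} :
    (powerGraph _).Adj (a m) (xa s) ↔ m = 0 ∨ m = (n : ZMod (2 * n)) := by
  constructor
  · rintro ⟨-, h | h⟩
    · rcases mem_zpowers_xa h with h | h | h | h <;> simp_all
    · obtain ⟨j, hj⟩ := exists_eq_a_of_mem_zpowers h
      exact absurd hj (by simp)
  · rintro (rfl | rfl)
    · exact ⟨by simp, Or.inl (one_def (n := n) ▸ Subgroup.one_mem _)⟩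
    · exact ⟨by simp, Or.inl (xa_sq s ▸ Subgroup.npow_mem_zpowers _ 2)⟩

theorem sub_mem_of_xa_mem_zpowers [NeZero n] (heven : Even n) {t s : ZMod (2 * n)}
    (h : xa t ∈ Subgroup.zpowers (xa s)) : t - s ∈ AddSubgroup.zmultiples 2 := by
  rcases mem_zpowers_xa h with h | h | h | h
  · simp at h
  · simp at h
  · rw [xa.inj h, sub_self]
    exact zero_mem _
  · rw [xa.inj h, add_sub_cancel_left]
    exact natCast_mem_zmultiples_two heven

theorem powerGraph_adj_xa_xa [NeZero n] (heven : Even n) {t s : ZMod (2 * n)}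
    (h : (powerGraph _).Adj (xa t) (xa s)) : t - s ∈ AddSubgroup.zmultiples 2 := by
  rcases h.2 with h | h
  · exact sub_mem_of_xa_mem_zpowers heven h
  · exact sub_mem_comm_iff.1 (sub_mem_of_xa_mem_zpowers heven h)

theorem conjSuperPowerGraph_adj_xa_xa [NeZero n] (heven : Even n) (i j : ZMod (2 * n)) :
    (conjSuperPowerGraph _).Adj (xa i) (xa j) ↔ i ≠ j ∧ j - i ∈ AddSubgroup.zmultiples 2 := by
  constructor
  · rintro ⟨hne, hconj | ⟨x', y', hx, hy, hadj⟩⟩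
    · obtain ⟨i', hi', hmem⟩ := conjRel_xa hconj
      obtain rfl := xa.inj hi'
      exact ⟨fun h => hne (by rw [h]), sub_mem_comm_iff.1 hmem⟩
    · refine ⟨fun h => hne (by rw [h]), ?_⟩
      obtain ⟨i', rfl, hi⟩ := conjRel_xa ((conjRel_equivalence _).symm hx)
      obtain ⟨j', rfl, hj⟩ := conjRel_xa ((conjRel_equivalence _).symm hy)
      rw [show j - i = (i' - i) - (i' - j') - (j' - j) by abel]
      exact sub_mem (sub_mem hi (powerGraph_adj_xa_xa heven hadj)) hj
  · rintro ⟨hij, hmem⟩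
    exact ⟨fun h => hij (xa.inj h), Or.inl (conjRel_xa_xa (sub_mem_comm_iff.1 hmem))⟩

theorem conjSuperPowerGraph_adj_a_xa [NeZero n] (m i : ZMod (2 * n)) :
    (conjSuperPowerGraph _).Adj (a m) (xa i) ↔ m = 0 ∨ m = (n : ZMod (2 * n)) := by
  constructor
  · rintro ⟨-, hconj | ⟨x', y', hx, hy, hadj⟩⟩
    · obtain ⟨i', hi', -⟩ := conjRel_xa hconj
      simp at hi'
    · obtain ⟨i', rfl, -⟩ := conjRel_xa ((conjRel_equivalence _).symm hy)
      rcases conjRel_a ((conjRel_equivalence _).symm hx) with rfl | rfl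
      · exact powerGraph_adj_a_xa_iff.1 hadj
      · rcases powerGraph_adj_a_xa_iff.1 hadj with h | h
        · exact Or.inl (neg_eq_zero.1 h)
        · exact Or.inr (by linear_combination -h - natCast_add_self (n := n))
  · intro h
    exact ⟨by simp, Or.inr ⟨a m, xa i, (conjRel_equivalence _).refl _,
      (conjRel_equivalence _).refl _, powerGraph_adj_a_xa_iff.2 h⟩⟩

theorem conjSuperPowerGraph_isTrueTwin_xa [NeZero n] (heven : Even n) {j j' : ZMod (2 * n)}
    (hne : j ≠ j') (hjj' : j' - j ∈ AddSubgroup.zmultiples 2) :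
    (conjSuperPowerGraph _).IsTrueTwin (xa j) (xa j') := by
  refine ⟨(conjSuperPowerGraph_adj_xa_xa heven _ _).2 ⟨hne, hjj'⟩, fun w hwj hwj' => ?_⟩
  cases w with
  | a m =>
    simp only [SimpleGraph.adj_comm _ (xa _), conjSuperPowerGraph_adj_a_xa]
  | xa k =>
    have hk : k ≠ j := fun h => hwj (by rw [h])
    have hk' : k ≠ j' := fun h => hwj' (by rw [h])
    rw [conjSuperPowerGraph_adj_xa_xa heven, conjSuperPowerGraph_adj_xa_xa heven,
      show k - j = (k - j') + (j' - j) by abel, AddSubgroup.add_mem_cancel_right _ hjj']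
    simp [hk.symm, hk'.symm]

theorem conjSuperPowerGraph_neighbors_xa [NeZero n] (heven : Even n) (i : ZMod (2 * n)) :
    {u | (conjSuperPowerGraph _).Adj (xa i) u} =
      insert 1 (insert (a (n : ZMod (2 * n)))
        (xa '' ({j | j - i ∈ AddSubgroup.zmultiples 2} \ {i}))) := by
  ext u
  cases u with
  | a m =>
    rw [Set.mem_ofPred_eq, SimpleGraph.adj_comm, conjSuperPowerGraph_adj_a_xa]
    simp
  | xa j =>
    rw [Set.mem_ofPred_eq, conjSuperPowerGraph_adj_xa_xa heven]
    simp [and_comm, eq_comm]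

theorem sdeg_conjSuperPowerGraph_xa [NeZero n] (heven : Even n) (i : ZMod (2 * n)) :
    sdeg (conjSuperPowerGraph _) (xa i) = n + 1 := by
  have hclass : {j | j - i ∈ AddSubgroup.zmultiples (2 : ZMod (2 * n))}.ncard = n := by
    rw [AddSubgroup.ncard_setOf_sub_mem, ZMod.card_zmultiples_two (NeZero.ne n)]
  rw [sdeg, conjSuperPowerGraph_neighbors_xa heven, Set.ncard_insert_of_notMem,
    Set.ncard_insert_of_notMem, Set.ncard_image_of_injective _ fun _ _ => xa.inj,
    Set.ncard_sdiff_singleton_of_mem (by simp), hclass]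
  · have := NeZero.pos n
    omega
  · simp
  · simp [Ne.symm (a_eq_one_iff.not.2 (natCast_ne_zero (n := n)))]

end QuaternionGroup

open QuaternionGroup

theorem stmt19_general (n : ℕ) [NeZero n] (heven : Even n) :
    2 * n - 2 ≤ Module.finrank ℝ (LinearMap.ker (Matrix.toLin'
      (somborMatrix (superGraph (powerGraph (QuaternionGroup n))
          (conjRel (QuaternionGroup n)) (conjRel_equivalence (QuaternionGroup n))) +
        (((n : ℝ) + 1) * Real.sqrt 2) •
          (1 : Matrix (QuaternionGroup n) (QuaternionGroup n) ℝ)))) := by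
  have : Fact (1 < 2 * n) := ⟨by have := NeZero.pos n; omega⟩
  let ι := {j : ZMod (2 * n) // j ∉ ({0, 1} : Finset (ZMod (2 * n)))}
  choose rep hrep_mem hrep using ZMod.exists_mem_pair_sub_mem_zmultiples_two (m := 2 * n)
  have hrep_ne (j k : ι) : (rep j : ZMod (2 * n)) ≠ k := fun h => k.2 (h ▸ hrep_mem j)
  let v : ι → QuaternionGroup n → ℝ := fun j => Pi.single (xa j) 1 - Pi.single (xa (rep j)) 1
  have hker (j : ι) : v j ∈ LinearMap.ker (Matrix.toLin' (somborMatrix (conjSuperPowerGraph _) +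
      (((n : ℝ) + 1) * Real.sqrt 2) • 1)) := by
    have hdeg : ((n : ℝ) + 1) = sdeg (conjSuperPowerGraph _) (xa (j : ZMod (2 * n))) := by
      rw [sdeg_conjSuperPowerGraph_xa heven]; push_cast; ring
    rw [LinearMap.mem_ker, Matrix.toLin'_apply, hdeg]
    exact (conjSuperPowerGraph_isTrueTwin_xa heven (hrep_ne j j).symm
      (sub_mem_comm_iff.1 (hrep j))).somborMatrix_add_smul_one_mulVec
  have hli : LinearIndependent ℝ v := by
    refine linearIndependent_of_apply_eq_single (fun j => xa j) fun i j => ?_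
    simp [v, Pi.single_apply, (hrep_ne i j).symm, Subtype.val_inj]
  have hcard : Fintype.card ι = 2 * n - 2 := by
    rw [Fintype.card_subtype_compl, Fintype.card_coe, ZMod.card,
      Finset.card_pair zero_ne_one]
  calc 2 * n - 2 = Module.finrank ℝ (Submodule.span ℝ (Set.range v)) := by
        rw [finrank_span_eq_card hli, hcard]
    _ ≤ _ := Submodule.finrank_mono (Submodule.span_le.2 (Set.range_subset_iff.2 hker))

theorem stmt19 (n : ℕ) [NeZero n] (hn : 2 ≤ n) (heven : Even n) :
    2 * n - 2 ≤ Module.finrank ℝ (LinearMap.ker (Matrix.toLin'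
      (somborMatrix (superGraph (powerGraph (QuaternionGroup n))
          (conjRel (QuaternionGroup n)) (conjRel_equivalence (QuaternionGroup n))) +
        (((n : ℝ) + 1) * Real.sqrt 2) •
          (1 : Matrix (QuaternionGroup n) (QuaternionGroup n) ℝ)))) :=
  stmt19_general n heven
end
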